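/- arXiv:2511.22206 — 2 statements merged into one kernel-verified Lean document; each statement's English description precedes it below -/
import Mathlib

section
/- Let K and M be real Hilbert spaces, W_pw ⊆ K and Z_pw ⊆ M finite-dimensional subspaces, and W_h ⊆ W_pw, Z_h ⊆ Z_pw subspaces. Let P¹ : W_pw → W_pw and P² : Z_pw → Z_pw be linear maps with range(P¹) ⊆ W_h, P¹ w = w for all w ∈ W_h, range(P²) ⊆ Z_h, and P² z = z for all z ∈ Z_h. Let C : W_h → Z_h be linear, and let B : Z_pw → W_pw be the linear map determined by ⟨B z, w⟩_K = ⟨z, C P¹ w⟩_M for all z ∈ Z_pw, w ∈ W_pw. Denote by Q¹ : K → W_pw and Q² : M → Z_pw the orthogonal projections, and by (P¹)*, (P²)* the adjoints of P¹, P² as operators on the finite-dimensional inner-product spaces W_pw, Z_pw. If z ∈ M and g ∈ K satisfy ⟨z, C ψ⟩_M = ⟨g, ψ⟩_K for all ψ ∈ W_h, then B((P²)* Q² z) = (P¹)* Q¹ g. -/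
open scoped InnerProductSpace RealInnerProductSpace

/-! Test both sides against `w ∈ Wpw`. Since `⟪P* Q x, u⟫ = ⟪x, P u⟫` for a map `P` on a broken
space with orthogonal projection `Q`, the left side becomes `⟪z, P² C P¹ w⟫ = ⟪z, C P¹ w⟫`
(`P²` fixes `Zh`, which contains the range of `C`) and the right side `⟪g, P¹ w⟫`; these agree
by the weak relation tested with `ψ = P¹ w`. -/

theorem Submodule.inner_adjoint_orthogonalProjectionOnto {𝕜 E : Type*} [RCLike 𝕜]
    [NormedAddCommGroup E] [InnerProductSpace 𝕜 E] (U : Submodule 𝕜 E) [FiniteDimensional 𝕜 U]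
    (P : U →ₗ[𝕜] U) (x : E) (u : U) :
    ⟪(LinearMap.adjoint P (U.orthogonalProjectionOnto x) : E), (u : E)⟫_𝕜 =
      ⟪x, (P u : E)⟫_𝕜 := by
  rw [← U.coe_inner, LinearMap.adjoint_inner_left,
    U.inner_orthogonalProjectionOnto_eq_of_mem_right]

theorem stmt3_general
    {K M : Type*} [NormedAddCommGroup K] [InnerProductSpace ℝ K]
    [NormedAddCommGroup M] [InnerProductSpace ℝ M]
    (Wpw : Submodule ℝ K) (Zpw : Submodule ℝ M)
    [FiniteDimensional ℝ Wpw] [FiniteDimensional ℝ Zpw]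
    (Wh : Submodule ℝ Wpw) (Zh : Submodule ℝ Zpw)
    (P1 : Wpw →ₗ[ℝ] Wpw) (P2 : Zpw →ₗ[ℝ] Zpw)
    (hP1range : ∀ w, P1 w ∈ Wh)
    (hP2fix : ∀ z ∈ Zh, P2 z = z)
    (C : Wh →ₗ[ℝ] Zh) (B : Zpw →ₗ[ℝ] Wpw)
    (hB : ∀ (z : Zpw) (w : Wpw),
      ⟪((B z : Wpw) : K), ((w : Wpw) : K)⟫ =
        ⟪(z : M), ((C ⟨P1 w, hP1range w⟩ : Zpw) : M)⟫)
    (z : M) (g : K)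
    (hweak : ∀ ψ : Wh, ⟪z, ((C ψ : Zpw) : M)⟫ = ⟪g, ((ψ : Wpw) : K)⟫) :
    B ((LinearMap.adjoint P2) (Submodule.orthogonalProjectionOnto Zpw z)) =
      (LinearMap.adjoint P1) (Submodule.orthogonalProjectionOnto Wpw g) := by
  refine ext_inner_right ℝ fun w => ?_
  set ψ : Wh := ⟨P1 w, hP1range w⟩
  calc ⟪((B (LinearMap.adjoint P2 (Zpw.orthogonalProjectionOnto z)) : Wpw) : K), (w : K)⟫
      = ⟪z, (P2 (C ψ) : M)⟫ := by
        rw [hB, Zpw.inner_adjoint_orthogonalProjectionOnto]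
    _ = ⟪g, (P1 w : K)⟫ := by rw [hP2fix _ (C ψ).2, hweak ψ]
    _ = ⟪(LinearMap.adjoint P1 (Wpw.orthogonalProjectionOnto g) : K), (w : K)⟫ :=
        (Wpw.inner_adjoint_orthogonalProjectionOnto P1 g w).symm

/-- Broken-FEEC weak curl commuting relation (the curl half of
Theorem 2.2 of the paper): with broken spaces `Wpw ⊆ K`, `Zpw ⊆ M`, conforming subspaces
`Wh ⊆ Wpw`, `Zh ⊆ Zpw`, conforming projections `P¹`, `P²`, a differential operator
`C : Wh → Zh`, and `B : Zpw → Wpw` determined by `⟨B z, w⟩_K = ⟨z, C P¹ w⟩_M`,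
if `⟨z, C ψ⟩_M = ⟨g, ψ⟩_K` for all `ψ ∈ Wh`, then `B ((P²)* Q² z) = (P¹)* Q¹ g`. -/
theorem stmt3
    {K M : Type*} [NormedAddCommGroup K] [InnerProductSpace ℝ K]
    [NormedAddCommGroup M] [InnerProductSpace ℝ M]
    (Wpw : Submodule ℝ K) (Zpw : Submodule ℝ M)
    [FiniteDimensional ℝ Wpw] [FiniteDimensional ℝ Zpw]
    (Wh : Submodule ℝ Wpw) (Zh : Submodule ℝ Zpw)
    (P1 : Wpw →ₗ[ℝ] Wpw) (P2 : Zpw →ₗ[ℝ] Zpw)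
    (hP1range : ∀ w, P1 w ∈ Wh) (hP1fix : ∀ w ∈ Wh, P1 w = w)
    (hP2range : ∀ z, P2 z ∈ Zh) (hP2fix : ∀ z ∈ Zh, P2 z = z)
    (C : Wh →ₗ[ℝ] Zh) (B : Zpw →ₗ[ℝ] Wpw)
    (hB : ∀ (z : Zpw) (w : Wpw),
      ⟪((B z : Wpw) : K), ((w : Wpw) : K)⟫ =
        ⟪(z : M), ((C ⟨P1 w, hP1range w⟩ : Zpw) : M)⟫)
    (z : M) (g : K)
    (hweak : ∀ ψ : Wh, ⟪z, ((C ψ : Zpw) : M)⟫ = ⟪g, ((ψ : Wpw) : K)⟫) :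
    B ((LinearMap.adjoint P2) (Submodule.orthogonalProjectionOnto Zpw z)) =
      (LinearMap.adjoint P1) (Submodule.orthogonalProjectionOnto Wpw g) :=
  stmt3_general Wpw Zpw Wh Zh P1 P2 hP1range hP2fix C B hB z g hweak
end

section
/- In the two-patch edge setting, there exists a linear operator P_e : V_pw → V_pw such that for every corner-continuous φ ∈ V_pw: (1) P_eφ is edge-continuous; (2) P_eφ = φ if and only if φ is edge-continuous; and (3) P_e preserves patchwise polynomial moments of order r, i.e. for each σ ∈ {−,+} and all q₁, q₂ ∈ Q one has ∫_{[0,1]²} (P_eφ)^σ(x,s) q₁(x) q₂(s) dx ds = ∫_{[0,1]²} φ^σ(x,s) q₁(x) q₂(s) dx ds. -/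
noncomputable section

/-- The `L²(0,1)` pairing `⟨f, g⟩ = ∫₀¹ f g`. -/
def l2ip (f g : ℝ → ℝ) : ℝ := ∫ x in (0:ℝ)..1, f x * g x

/-- Real polynomial functions of degree at most `r - 1`. -/
def polyDegLT (r : ℕ) : Set (ℝ → ℝ) :=
  {f | ∃ p : Polynomial ℝ, p.degree < (r : WithBot ℕ) ∧ f = fun x => p.eval x}

/-- Tensor-product span of the functions `(x, s) ↦ λᵢ(x) λⱼ(s)`. -/
def tensorSpan {n : ℕ} (lam : Fin (n + 1) → ℝ → ℝ) : Submodule ℝ (ℝ → ℝ → ℝ) :=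
  Submodule.span ℝ {f | ∃ i j, f = fun x s => lam i x * lam j s}

/-- Edge continuity: the two patch components agree on the shared edge `s = 0`. -/
def EdgeCont (φ : (ℝ → ℝ → ℝ) × (ℝ → ℝ → ℝ)) : Prop :=
  ∀ x ∈ Set.Icc (0:ℝ) 1, φ.1 x 0 = φ.2 x 0

/-- Corner continuity: the two patch components agree at the two endpoints of the edge. -/
def CornerCont (φ : (ℝ → ℝ → ℝ) × (ℝ → ℝ → ℝ)) : Prop :=
  φ.1 0 0 = φ.2 0 0 ∧ φ.1 1 0 = φ.2 1 0

/-- The moment `∫_{[0,1]²} f(x,s) q₁(x) q₂(s) dx ds`. -/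
def mom2 (f : ℝ → ℝ → ℝ) (q₁ q₂ : ℝ → ℝ) : ℝ :=
  ∫ x in (0:ℝ)..1, ∫ s in (0:ℝ)..1, f x s * q₁ x * q₂ s

/-! The jump `c(x) = φ⁻(x,0) - φ⁺(x,0)` of a broken function lies in `𝕍₊`, and `v = λ⁺₀ - μ⁺₀`
satisfies `v(0) = 1` and has vanishing moments against `Q`. Adding `c ⊗ v` to `φ⁺` therefore
removes the jump without changing any moment, so every broken function is an edge-continuous one
plus an element of the space `K` of pairs with vanishing moments. Any linear projection onto the
edge-continuous subspace along a complement contained in `K` is then the required operator. -/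

open MeasureTheory Set

theorem Submodule.exists_projection_of_codisjoint {K V : Type*} [DivisionRing K]
    [AddCommGroup V] [Module K V] {p q : Submodule K V} (h : Codisjoint p q) :
    ∃ P : V →ₗ[K] V, (∀ x, P x ∈ p) ∧ (∀ x ∈ p, P x = x) ∧ ∀ x, x - P x ∈ q := by
  obtain ⟨q', hq'q, hq'p⟩ := h.symm.exists_isCompl
  exact ⟨p.projection q' hq'p.symm, projection_apply_mem _, fun _ ↦ projection_apply_of_mem_left _,
    fun x ↦ hq'q (sub_projection_mem _ x)⟩

lemma continuous_of_mem_polyDegLT {r : ℕ} {q : ℝ → ℝ} (hq : q ∈ polyDegLT r) : Continuous q := by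
  obtain ⟨p, -, rfl⟩ := hq
  exact p.continuous

lemma l2ip_sub {f g q : ℝ → ℝ} (hf : ContinuousOn f (Icc 0 1)) (hg : ContinuousOn g (Icc 0 1))
    (hq : ContinuousOn q (Icc 0 1)) : l2ip (f - g) q = l2ip f q - l2ip g q := by
  simp only [l2ip, Pi.sub_apply, sub_mul]
  exact intervalIntegral.integral_sub ((hf.mul hq).intervalIntegrable_of_Icc zero_le_one)
    ((hg.mul hq).intervalIntegrable_of_Icc zero_le_one)

def edgeTrace : (ℝ → ℝ → ℝ) →ₗ[ℝ] ℝ → ℝ where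
  toFun f x := f x 0
  map_add' _ _ := rfl
  map_smul' _ _ := rfl

def tensorMul : (ℝ → ℝ) →ₗ[ℝ] (ℝ → ℝ) →ₗ[ℝ] ℝ → ℝ → ℝ :=
  LinearMap.mk₂ ℝ (fun u v x s ↦ u x * v s)
    (fun _ _ _ ↦ by funext; simp [add_mul]) (fun _ _ _ ↦ by funext; simp [mul_assoc])
    (fun _ _ _ ↦ by funext; simp [mul_add]) (fun _ _ _ ↦ by funext; simp [mul_left_comm])

section Span

variable {n : ℕ} (lam : Fin (n + 1) → ℝ → ℝ)

lemma continuousOn_of_mem_span (hc : ∀ i, ContinuousOn (lam i) (Icc 0 1)) {u : ℝ → ℝ}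
    (hu : u ∈ Submodule.span ℝ (range lam)) : ContinuousOn u (Icc 0 1) := by
  induction hu using Submodule.span_induction with
  | mem x hx => obtain ⟨i, rfl⟩ := hx; exact hc i
  | zero => exact continuousOn_const
  | add x y _ _ hx hy => exact hx.add hy
  | smul a x _ hx => exact hx.const_smul a

lemma edgeTrace_mem_span {f : ℝ → ℝ → ℝ} (hf : f ∈ tensorSpan lam) :
    edgeTrace f ∈ Submodule.span ℝ (range lam) := by
  refine (Submodule.span_le (p := (Submodule.span ℝ (range lam)).comap edgeTrace)).2 ?_ hf
  rintro _ ⟨i, j, rfl⟩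
  have h : edgeTrace (fun x s ↦ lam i x * lam j s) = lam j 0 • lam i := by
    funext x; simp [edgeTrace, mul_comm]
  rw [SetLike.mem_coe, Submodule.mem_comap, h]
  exact Submodule.smul_mem _ _ (Submodule.subset_span ⟨i, rfl⟩)

lemma tensorMul_mem_tensorSpan {u v : ℝ → ℝ} (hu : u ∈ Submodule.span ℝ (range lam))
    (hv : v ∈ Submodule.span ℝ (range lam)) : tensorMul u v ∈ tensorSpan lam := by
  have h := Submodule.apply_mem_map₂ tensorMul hu hv
  rw [Submodule.map₂_span_span] at h
  refine Submodule.span_le.2 ?_ h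
  rintro _ ⟨_, ⟨i, rfl⟩, _, ⟨j, rfl⟩, rfl⟩
  exact Submodule.subset_span ⟨i, j, rfl⟩

end Span

section Moments

variable {q₁ q₂ : ℝ → ℝ}

def innerMoment (f : ℝ → ℝ → ℝ) (q₁ q₂ : ℝ → ℝ) (x : ℝ) : ℝ :=
  ∫ s in (0:ℝ)..1, f x s * q₁ x * q₂ s

lemma mom2_eq_integral_innerMoment (f : ℝ → ℝ → ℝ) :
    mom2 f q₁ q₂ = ∫ x in (0:ℝ)..1, innerMoment f q₁ q₂ x :=
  rfl

lemma innerMoment_add {f g : ℝ → ℝ → ℝ}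
    (hf : ∀ x, IntervalIntegrable (fun s ↦ f x s * q₁ x * q₂ s) volume 0 1)
    (hg : ∀ x, IntervalIntegrable (fun s ↦ g x s * q₁ x * q₂ s) volume 0 1) :
    innerMoment (f + g) q₁ q₂ = innerMoment f q₁ q₂ + innerMoment g q₁ q₂ := by
  funext x
  simp only [innerMoment, Pi.add_apply, add_mul]
  exact intervalIntegral.integral_add (hf x) (hg x)

lemma innerMoment_smul (c : ℝ) (f : ℝ → ℝ → ℝ) :
    innerMoment (c • f) q₁ q₂ = c • innerMoment f q₁ q₂ := by
  funext x
  simp only [innerMoment, Pi.smul_apply, smul_eq_mul, mul_assoc,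
    intervalIntegral.integral_const_mul]

/-- `mom2` is additive only where both of its integrals exist: `∫` of a non-integrable function
is `0`. -/
def momentIntegrable (q₁ q₂ : ℝ → ℝ) : Submodule ℝ (ℝ → ℝ → ℝ) where
  carrier := {f | (∀ x, IntervalIntegrable (fun s ↦ f x s * q₁ x * q₂ s) volume 0 1) ∧
    IntervalIntegrable (innerMoment f q₁ q₂) volume 0 1}
  add_mem' {f g} hf hg := by
    refine ⟨fun x ↦ ?_, innerMoment_add hf.1 hg.1 ▸ hf.2.add hg.2⟩
    simpa only [Pi.add_apply, add_mul] using (hf.1 x).add (hg.1 x)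
  zero_mem' := by
    refine ⟨fun _ ↦ by simp, ?_⟩
    rw [show innerMoment 0 q₁ q₂ = 0 from funext fun _ ↦ by simp [innerMoment]]
    exact intervalIntegrable_const
  smul_mem' c f hf := by
    refine ⟨fun x ↦ ?_, innerMoment_smul c f ▸ hf.2.const_mul c⟩
    simpa only [Pi.smul_apply, smul_eq_mul, mul_assoc] using (hf.1 x).const_mul c

lemma mom2_add {f g : ℝ → ℝ → ℝ} (hf : f ∈ momentIntegrable q₁ q₂)
    (hg : g ∈ momentIntegrable q₁ q₂) : mom2 (f + g) q₁ q₂ = mom2 f q₁ q₂ + mom2 g q₁ q₂ := by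
  rw [mom2_eq_integral_innerMoment, innerMoment_add hf.1 hg.1]
  exact intervalIntegral.integral_add hf.2 hg.2

lemma mom2_smul (c : ℝ) (f : ℝ → ℝ → ℝ) : mom2 (c • f) q₁ q₂ = c * mom2 f q₁ q₂ := by
  simp only [mom2_eq_integral_innerMoment, innerMoment_smul, Pi.smul_apply, smul_eq_mul,
    intervalIntegral.integral_const_mul]

lemma innerMoment_tensorMul (u v : ℝ → ℝ) (x : ℝ) :
    innerMoment (tensorMul u v) q₁ q₂ x = u x * q₁ x * l2ip v q₂ := by
  simp only [innerMoment, tensorMul, LinearMap.mk₂_apply, l2ip,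
    ← intervalIntegral.integral_const_mul]
  congr 1
  funext s
  ring

lemma mom2_tensorMul (u v : ℝ → ℝ) : mom2 (tensorMul u v) q₁ q₂ = l2ip u q₁ * l2ip v q₂ := by
  simp only [mom2_eq_integral_innerMoment, innerMoment_tensorMul,
    intervalIntegral.integral_mul_const, l2ip]

lemma tensorMul_mem_momentIntegrable {u v : ℝ → ℝ} (hu : ContinuousOn u (Icc 0 1))
    (hv : ContinuousOn v (Icc 0 1)) (hq₁ : ContinuousOn q₁ (Icc 0 1))
    (hq₂ : ContinuousOn q₂ (Icc 0 1)) : tensorMul u v ∈ momentIntegrable q₁ q₂ := by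
  refine ⟨fun x ↦ ?_, ?_⟩
  · have h : (fun s ↦ tensorMul u v x s * q₁ x * q₂ s) = fun s ↦ u x * q₁ x * (v s * q₂ s) := by
      funext s; simp only [tensorMul, LinearMap.mk₂_apply]; ring
    exact h ▸ ((hv.mul hq₂).intervalIntegrable_of_Icc zero_le_one).const_mul _
  · rw [show innerMoment (tensorMul u v) q₁ q₂ = _ from funext (innerMoment_tensorMul u v)]
    exact ((hu.mul hq₁).mul continuousOn_const).intervalIntegrable_of_Icc zero_le_one

lemma tensorSpan_le_momentIntegrable {n : ℕ} {lam : Fin (n + 1) → ℝ → ℝ}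
    (hc : ∀ i, ContinuousOn (lam i) (Icc 0 1)) (hq₁ : ContinuousOn q₁ (Icc 0 1))
    (hq₂ : ContinuousOn q₂ (Icc 0 1)) : tensorSpan lam ≤ momentIntegrable q₁ q₂ := by
  refine Submodule.span_le.2 ?_
  rintro _ ⟨i, j, rfl⟩
  exact tensorMul_mem_momentIntegrable (hc i) (hc j) hq₁ hq₂

def momentKernel (Q : Set (ℝ → ℝ)) : Submodule ℝ (ℝ → ℝ → ℝ) where
  carrier := {f | ∀ q₁ ∈ Q, ∀ q₂ ∈ Q, f ∈ momentIntegrable q₁ q₂ ∧ mom2 f q₁ q₂ = 0}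
  add_mem' hf hg q₁ hq₁ q₂ hq₂ := by
    obtain ⟨hfi, hf0⟩ := hf q₁ hq₁ q₂ hq₂
    obtain ⟨hgi, hg0⟩ := hg q₁ hq₁ q₂ hq₂
    exact ⟨add_mem hfi hgi, by rw [mom2_add hfi hgi, hf0, hg0, add_zero]⟩
  zero_mem' _ _ _ _ := ⟨zero_mem _, by simp [mom2]⟩
  smul_mem' c f hf q₁ hq₁ q₂ hq₂ := by
    obtain ⟨hfi, hf0⟩ := hf q₁ hq₁ q₂ hq₂
    exact ⟨Submodule.smul_mem _ c hfi, by rw [mom2_smul, hf0, mul_zero]⟩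

lemma tensorMul_mem_momentKernel {Q : Set (ℝ → ℝ)} (hQ : ∀ q ∈ Q, ContinuousOn q (Icc 0 1))
    {u v : ℝ → ℝ} (hu : ContinuousOn u (Icc 0 1)) (hv : ContinuousOn v (Icc 0 1))
    (hvQ : ∀ q ∈ Q, l2ip v q = 0) : tensorMul u v ∈ momentKernel Q := fun q₁ hq₁ q₂ hq₂ ↦
  ⟨tensorMul_mem_momentIntegrable hu hv (hQ q₁ hq₁) (hQ q₂ hq₂),
    by rw [mom2_tensorMul, hvQ q₂ hq₂, mul_zero]⟩

lemma mom2_eq_of_sub_mem_momentKernel {Q : Set (ℝ → ℝ)} {f g : ℝ → ℝ → ℝ}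
    (hf : f ∈ momentIntegrable q₁ q₂) (hgf : g - f ∈ momentKernel Q) (hq₁ : q₁ ∈ Q)
    (hq₂ : q₂ ∈ Q) : mom2 f q₁ q₂ = mom2 g q₁ q₂ := by
  obtain ⟨hgfi, hgf0⟩ := hgf q₁ hq₁ q₂ hq₂
  rw [← sub_add_cancel g f, mom2_add hgfi hf, hgf0, zero_add]

end Moments

def edgeContSubmodule : Submodule ℝ ((ℝ → ℝ → ℝ) × (ℝ → ℝ → ℝ)) where
  carrier := {φ | EdgeCont φ}
  add_mem' ha hb x hx := by simp [ha x hx, hb x hx]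
  zero_mem' _ _ := rfl
  smul_mem' c _ ha x hx := by simp [ha x hx]

lemma codisjoint_edgeCont_momentKernel {nm np : ℕ} {lamm : Fin (nm + 1) → ℝ → ℝ}
    {lamp : Fin (np + 1) → ℝ → ℝ}
    (hc_p : ∀ i, ContinuousOn (lamp i) (Icc 0 1))
    (hnested : Submodule.span ℝ (range lamm) ≤ Submodule.span ℝ (range lamp))
    {Q : Set (ℝ → ℝ)} (hQ : ∀ q ∈ Q, ContinuousOn q (Icc 0 1)) {v : ℝ → ℝ}
    (hv : v ∈ Submodule.span ℝ (range lamp)) (hv0 : v 0 = 1) (hvQ : ∀ q ∈ Q, l2ip v q = 0) :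
    Codisjoint (edgeContSubmodule.comap ((tensorSpan lamm).prod (tensorSpan lamp)).subtype)
      (((momentKernel Q).prod (momentKernel Q)).comap
        ((tensorSpan lamm).prod (tensorSpan lamp)).subtype) := by
  rw [codisjoint_iff, eq_top_iff]
  rintro ⟨⟨f, g⟩, hfg⟩ -
  obtain ⟨hf, hg⟩ := Submodule.mem_prod.1 hfg
  have hjump : edgeTrace f - edgeTrace g ∈ Submodule.span ℝ (range lamp) :=
    sub_mem (hnested (edgeTrace_mem_span lamm hf)) (edgeTrace_mem_span lamp hg)
  set w := tensorMul (edgeTrace f - edgeTrace g) v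
  have hwV : w ∈ tensorSpan lamp := tensorMul_mem_tensorSpan lamp hjump hv
  have hwK : w ∈ momentKernel Q := tensorMul_mem_momentKernel hQ
    (continuousOn_of_mem_span lamp hc_p hjump) (continuousOn_of_mem_span lamp hc_p hv) hvQ
  refine Submodule.mem_sup.2 ⟨⟨(f, g + w), Submodule.mem_prod.2 ⟨hf, add_mem hg hwV⟩⟩, ?_,
    ⟨(0, -w), Submodule.mem_prod.2 ⟨zero_mem _, neg_mem hwV⟩⟩, ⟨zero_mem _, neg_mem hwK⟩, ?_⟩
  · intro x _
    simp [w, tensorMul, edgeTrace, hv0]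
  · exact Subtype.ext (by simp)

theorem stmt6_general
    -- the two univariate spline spaces 𝕍₋ ⊆ 𝕍₊ with interpolatory bases
    (nm np : ℕ)
    (lamm : Fin (nm + 1) → ℝ → ℝ) (lamp : Fin (np + 1) → ℝ → ℝ)
    (hc_m : ∀ i, ContinuousOn (lamm i) (Set.Icc (0:ℝ) 1))
    (hc_p : ∀ i, ContinuousOn (lamp i) (Set.Icc (0:ℝ) 1))
    (h0_p : ∀ i, lamp i 0 = if i = 0 then 1 else 0)
    (hnested : Submodule.span ℝ (Set.range lamm) ≤ Submodule.span ℝ (Set.range lamp))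
    -- the order r of moment preservation; Q ⊆ 𝕍₋
    (r : ℕ)
    -- (b) interior splines μ^σ_e matching the moments of the endpoint basis functions
    (hmu_p : ∀ e : Fin (np + 1), e = 0 ∨ e = Fin.last np →
      ∃ μ ∈ Submodule.span ℝ (Set.range lamp), μ 0 = 0 ∧ μ 1 = 0 ∧
        ∀ q ∈ polyDegLT r, l2ip μ q = l2ip (lamp e) q) :
    -- conclusion: the local edge-conforming projection P_e on the broken space V_pw
    ∃ P : ↥((tensorSpan lamm).prod (tensorSpan lamp)) →ₗ[ℝ]
          ↥((tensorSpan lamm).prod (tensorSpan lamp)),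
      ∀ φ : ↥((tensorSpan lamm).prod (tensorSpan lamp)), CornerCont ((φ : (ℝ → ℝ → ℝ) × (ℝ → ℝ → ℝ))) →
        (EdgeCont ((P φ : (ℝ → ℝ → ℝ) × (ℝ → ℝ → ℝ)))) ∧
        (P φ = φ ↔ EdgeCont ((φ : (ℝ → ℝ → ℝ) × (ℝ → ℝ → ℝ)))) ∧
        (∀ q₁ ∈ polyDegLT r, ∀ q₂ ∈ polyDegLT r,
          mom2 ((P φ : (ℝ → ℝ → ℝ) × (ℝ → ℝ → ℝ)).1) q₁ q₂ =
            mom2 ((φ : (ℝ → ℝ → ℝ) × (ℝ → ℝ → ℝ)).1) q₁ q₂ ∧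
          mom2 ((P φ : (ℝ → ℝ → ℝ) × (ℝ → ℝ → ℝ)).2) q₁ q₂ =
            mom2 ((φ : (ℝ → ℝ → ℝ) × (ℝ → ℝ → ℝ)).2) q₁ q₂) := by
  obtain ⟨μ, hμ, hμ0, -, hμQ⟩ := hmu_p 0 (Or.inl rfl)
  have hQ : ∀ q ∈ polyDegLT r, ContinuousOn q (Icc 0 1) :=
    fun q hq ↦ (continuous_of_mem_polyDegLT hq).continuousOn
  have hvQ : ∀ q ∈ polyDegLT r, l2ip (lamp 0 - μ) q = 0 := fun q hq ↦ by
    rw [l2ip_sub (hc_p 0) (continuousOn_of_mem_span lamp hc_p hμ) (hQ q hq), hμQ q hq, sub_self]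
  obtain ⟨P, hPE, hPid, hPK⟩ := Submodule.exists_projection_of_codisjoint
    (codisjoint_edgeCont_momentKernel hc_p hnested hQ
      (sub_mem (Submodule.subset_span ⟨0, rfl⟩) hμ) (by simp [h0_p, hμ0]) hvQ)
  refine ⟨P, fun φ _ ↦ ⟨hPE φ, ⟨fun h ↦ h ▸ hPE φ, hPid φ⟩, fun q₁ hq₁ q₂ hq₂ ↦ ?_⟩⟩
  obtain ⟨hPm, hPp⟩ := Submodule.mem_prod.1 (P φ).2
  obtain ⟨hKm, hKp⟩ := Submodule.mem_prod.1 (hPK φ)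
  exact ⟨mom2_eq_of_sub_mem_momentKernel (tensorSpan_le_momentIntegrable hc_m (hQ q₁ hq₁)
      (hQ q₂ hq₂) hPm) hKm hq₁ hq₂,
    mom2_eq_of_sub_mem_momentKernel (tensorSpan_le_momentIntegrable hc_p (hQ q₁ hq₁)
      (hQ q₂ hq₂) hPp) hKp hq₁ hq₂⟩

/-- Proposition 3.2 of the paper, two-patch edge setting: there exists a
local edge-conforming operator `P_e` on the broken space `V_pw` such that for every
corner-continuous `φ`: `P_e φ` is edge-continuous, `P_e φ = φ` iff `φ` is edge-continuous,
and `P_e` preserves the patchwise polynomial moments of order `r`. -/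
theorem stmt6
    -- the two univariate spline spaces 𝕍₋ ⊆ 𝕍₊ with interpolatory bases
    (nm np : ℕ)
    (lamm : Fin (nm + 1) → ℝ → ℝ) (lamp : Fin (np + 1) → ℝ → ℝ)
    (hc_m : ∀ i, ContinuousOn (lamm i) (Set.Icc (0:ℝ) 1))
    (hc_p : ∀ i, ContinuousOn (lamp i) (Set.Icc (0:ℝ) 1))
    (hli_m : LinearIndependent ℝ lamm) (hli_p : LinearIndependent ℝ lamp)
    (h0_m : ∀ i, lamm i 0 = if i = 0 then 1 else 0)
    (h1_m : ∀ i, lamm i 1 = if i = Fin.last nm then 1 else 0)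
    (h0_p : ∀ i, lamp i 0 = if i = 0 then 1 else 0)
    (h1_p : ∀ i, lamp i 1 = if i = Fin.last np then 1 else 0)
    (hnested : Submodule.span ℝ (Set.range lamm) ≤ Submodule.span ℝ (Set.range lamp))
    -- the order r of moment preservation; Q ⊆ 𝕍₋
    (r : ℕ)
    (hQ : polyDegLT r ⊆ (Submodule.span ℝ (Set.range lamm) : Set (ℝ → ℝ)))
    -- (a) a moment-preserving restriction operator R : 𝕍₊ → 𝕍₋ preserving endpoint values
    (R : ↥(Submodule.span ℝ (Set.range lamp)) →ₗ[ℝ] ↥(Submodule.span ℝ (Set.range lamm)))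
    (hRid : ∀ v : ↥(Submodule.span ℝ (Set.range lamp)),
      (v : ℝ → ℝ) ∈ Submodule.span ℝ (Set.range lamm) → ((R v : ℝ → ℝ)) = (v : ℝ → ℝ))
    (hR0 : ∀ v, ((R v : ℝ → ℝ)) 0 = (v : ℝ → ℝ) 0)
    (hR1 : ∀ v, ((R v : ℝ → ℝ)) 1 = (v : ℝ → ℝ) 1)
    (hRmom : ∀ v, ∀ q ∈ polyDegLT r, l2ip (R v : ℝ → ℝ) q = l2ip (v : ℝ → ℝ) q)
    -- (b) interior splines μ^σ_e matching the moments of the endpoint basis functions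
    (hmu_m : ∀ e : Fin (nm + 1), e = 0 ∨ e = Fin.last nm →
      ∃ μ ∈ Submodule.span ℝ (Set.range lamm), μ 0 = 0 ∧ μ 1 = 0 ∧
        ∀ q ∈ polyDegLT r, l2ip μ q = l2ip (lamm e) q)
    (hmu_p : ∀ e : Fin (np + 1), e = 0 ∨ e = Fin.last np →
      ∃ μ ∈ Submodule.span ℝ (Set.range lamp), μ 0 = 0 ∧ μ 1 = 0 ∧
        ∀ q ∈ polyDegLT r, l2ip μ q = l2ip (lamp e) q) :
    -- conclusion: the local edge-conforming projection P_e on the broken space V_pw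
    ∃ P : ↥((tensorSpan lamm).prod (tensorSpan lamp)) →ₗ[ℝ]
          ↥((tensorSpan lamm).prod (tensorSpan lamp)),
      ∀ φ : ↥((tensorSpan lamm).prod (tensorSpan lamp)), CornerCont ((φ : (ℝ → ℝ → ℝ) × (ℝ → ℝ → ℝ))) →
        (EdgeCont ((P φ : (ℝ → ℝ → ℝ) × (ℝ → ℝ → ℝ)))) ∧
        (P φ = φ ↔ EdgeCont ((φ : (ℝ → ℝ → ℝ) × (ℝ → ℝ → ℝ)))) ∧
        (∀ q₁ ∈ polyDegLT r, ∀ q₂ ∈ polyDegLT r,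
          mom2 ((P φ : (ℝ → ℝ → ℝ) × (ℝ → ℝ → ℝ)).1) q₁ q₂ =
            mom2 ((φ : (ℝ → ℝ → ℝ) × (ℝ → ℝ → ℝ)).1) q₁ q₂ ∧
          mom2 ((P φ : (ℝ → ℝ → ℝ) × (ℝ → ℝ → ℝ)).2) q₁ q₂ =
            mom2 ((φ : (ℝ → ℝ → ℝ) × (ℝ → ℝ → ℝ)).2) q₁ q₂) :=
  stmt6_general nm np lamm lamp hc_m hc_p h0_p hnested r hmu_p
end
end
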